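/- An inversion sequence e of length n avoids both 102 and 012 if and only if there exist m ≥ 0, indices m < i_1 ≤ i_2 ≤ ... ≤ i_ℓ (these being exactly the positions of the nonzero entries) such that m = e_{i_1} ≥ e_{i_2} ≥ ... ≥ e_{i_ℓ} ≥ 1 where m = max(e), and e_j = 0 for all other indices j. -/

import Mathlib

/-- An inversion sequence of length `n`, 1-indexed: `0 ≤ e i ≤ i - 1` for `1 ≤ i ≤ n`,
normalized to be `0` outside `[1, n]`. -/
def IsInvSeq (n : ℕ) (e : ℕ → ℕ) : Prop :=
  e 0 = 0 ∧ (∀ i, 1 ≤ i → i ≤ n → e i < i) ∧ ∀ i, n < i → e i = 0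

/-- `e` contains a length-3 pattern described by the relation `P` on values. -/
def Contains (n : ℕ) (P : ℕ → ℕ → ℕ → Prop) (e : ℕ → ℕ) : Prop :=
  ∃ i j k, 1 ≤ i ∧ i < j ∧ j < k ∧ k ≤ n ∧ P (e i) (e j) (e k)

def Pat102 (a b c : ℕ) : Prop := b < a ∧ a < c
def Pat001 (a b c : ℕ) : Prop := a = b ∧ b < c
def Pat011 (a b c : ℕ) : Prop := a < b ∧ b = c
def Pat012 (a b c : ℕ) : Prop := a < b ∧ b < c
def Pat021 (a b c : ℕ) : Prop := a < c ∧ c < b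
def Pat110 (a b c : ℕ) : Prop := a = b ∧ c < b
def Pat120 (a b c : ℕ) : Prop := c < a ∧ a < b
def Pat201 (a b c : ℕ) : Prop := b < c ∧ c < a
def Pat210 (a b c : ℕ) : Prop := c < b ∧ b < a
def Pat101 (a b c : ℕ) : Prop := a = c ∧ b < a

/-- `p` is the position of the first descent of `e` (with convention `e (n+1) = -1`,
i.e. there is always a descent at position `n`). -/
def PrMax (n : ℕ) (e : ℕ → ℕ) (p : ℕ) : Prop :=
  1 ≤ p ∧ p ≤ n ∧ (∀ i, 1 ≤ i → i < p → e i ≤ e (i + 1)) ∧ (p = n ∨ e (p + 1) < e p)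

/-- `e` has rank `t`, i.e. `t = prmax e - max e - 1`. -/
def HasRank (n : ℕ) (e : ℕ → ℕ) (t : ℕ) : Prop :=
  ∃ p, PrMax n e p ∧ p = e p + t + 1

/-- `m` is the maximum value of `e` on `[1, n]`. -/
def IsMaxVal (n : ℕ) (e : ℕ → ℕ) (m : ℕ) : Prop :=
  (∀ i, 1 ≤ i → i ≤ n → e i ≤ m) ∧ ∃ i, 1 ≤ i ∧ i ≤ n ∧ e i = m


/-
An inversion sequence starts with `e 1 = 0`, so a pattern `012` is the same thing as an ascent
`0 < e i < e j` between two nonzero entries: avoiding `012` says exactly that the nonzero entries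
are weakly decreasing. That also rules out `102`, whose outer two entries form such an ascent.
The first nonzero entry is then the maximum `m`, and `e i < i` at that position gives `m < i` for
every nonzero position `i`.
-/

def NonzeroAntitone (n : ℕ) (e : ℕ → ℕ) : Prop :=
  ∀ i j, 1 ≤ i → i < j → j ≤ n → e i ≠ 0 → e j ≠ 0 → e j ≤ e i

lemma IsInvSeq.apply_one {n : ℕ} {e : ℕ → ℕ} (he : IsInvSeq n e) : e 1 = 0 := by
  rcases Nat.eq_zero_or_pos n with rfl | hn
  · exact he.2.2 1 Nat.one_pos
  · exact Nat.lt_one_iff.mp (he.2.1 1 le_rfl hn)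

section

variable {n : ℕ} {e : ℕ → ℕ}

lemma nonzeroAntitone_of_not_contains_012 (h1 : e 1 = 0) (h012 : ¬ Contains n Pat012 e) :
    NonzeroAntitone n e := by
  intro i j hi hij hjn hei hej
  by_contra! hlt
  have hi1 : 1 < i := lt_of_le_of_ne hi fun h => hei (h ▸ h1)
  exact h012 ⟨1, i, j, le_rfl, hi1, hij, hjn, h1 ▸ Nat.pos_of_ne_zero hei, hlt⟩

lemma NonzeroAntitone.not_contains_102 (hdec : NonzeroAntitone n e) : ¬ Contains n Pat102 e := by
  rintro ⟨i, j, k, hi, hij, hjk, hkn, hji, hik⟩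
  have := hdec i k hi (hij.trans hjk) hkn (by omega) (by omega)
  omega

lemma NonzeroAntitone.not_contains_012 (hdec : NonzeroAntitone n e) : ¬ Contains n Pat012 e := by
  rintro ⟨i, j, k, hi, hij, hjk, hkn, hij', hjk'⟩
  have := hdec j k (hi.trans hij.le) hjk hkn (by omega) (by omega)
  omega

lemma NonzeroAntitone.exists_max (hdec : NonzeroAntitone n e)
    (hlt : ∀ i, 1 ≤ i → i ≤ n → e i < i) :
    ∃ m, (∀ i, 1 ≤ i → i ≤ n → e i ≤ m) ∧
      (∀ i, 1 ≤ i → i ≤ n → e i ≠ 0 → m < i) ∧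
      (∀ i, 1 ≤ i → i ≤ n → e i ≠ 0 → (∀ j, 1 ≤ j → j < i → e j = 0) → e i = m) := by
  classical
  by_cases hex : ∃ i, 1 ≤ i ∧ i ≤ n ∧ e i ≠ 0
  · obtain ⟨hi₀, hi₀n, hne₀⟩ := Nat.find_spec hex
    have hfirst : ∀ i, 1 ≤ i → i ≤ n → e i ≠ 0 → Nat.find hex ≤ i :=
      fun i hi hin hne => Nat.find_min' hex ⟨hi, hin, hne⟩
    refine ⟨e (Nat.find hex), fun i hi hin => ?_, fun i hi hin hne => ?_,
      fun i hi hin hne hzero => ?_⟩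
    · rcases eq_or_ne (e i) 0 with hz | hne
      · simp [hz]
      · rcases (hfirst i hi hin hne).eq_or_lt with h | h
        · exact h ▸ le_rfl
        · exact hdec _ i hi₀ h hin hne₀ hne
    · exact (hlt _ hi₀ hi₀n).trans_le (hfirst i hi hin hne)
    · rcases (hfirst i hi hin hne).eq_or_lt with h | h
      · exact h ▸ rfl
      · exact absurd (hzero _ hi₀ h) hne₀
  · push Not at hex
    exact ⟨0, fun i hi hin => (hex i hi hin).le, fun i hi hin hne => absurd (hex i hi hin) hne,
      fun i hi hin hne => absurd (hex i hi hin) hne⟩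

end

theorem stmt5 (n : ℕ) (e : ℕ → ℕ) (he : IsInvSeq n e) :
    (¬ Contains n Pat102 e ∧ ¬ Contains n Pat012 e) ↔
      ∃ m, (∀ i, 1 ≤ i → i ≤ n → e i ≤ m) ∧
        (∀ i j, 1 ≤ i → i < j → j ≤ n → e i ≠ 0 → e j ≠ 0 → e j ≤ e i) ∧
        (∀ i, 1 ≤ i → i ≤ n → e i ≠ 0 → m < i) ∧
        (∀ i, 1 ≤ i → i ≤ n → e i ≠ 0 → (∀ j, 1 ≤ j → j < i → e j = 0) → e i = m) := by
  constructor
  · rintro ⟨-, h012⟩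
    have hdec := nonzeroAntitone_of_not_contains_012 he.apply_one h012
    obtain ⟨m, hmax, hpos, hfirst⟩ := hdec.exists_max he.2.1
    exact ⟨m, hmax, hdec, hpos, hfirst⟩
  · rintro ⟨m, -, hdec, -, -⟩
    exact ⟨NonzeroAntitone.not_contains_102 hdec, NonzeroAntitone.not_contains_012 hdec⟩
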